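/- Let H be a complete bipartite graph with parts L and R of equal size N, where edges of a subset E' ⊆ L×R have weight 1 and all other edges have weight 2. If the maximum size of a matching using only E'-edges is k, then the minimum cost of a semi-matching in H equals 2N − k. -/

import Mathlib

/-!
A right node receiving `d` tasks costs at least `1 + 2 + ⋯ + d ≥ 2d - 1`, and at least `2d` when
all its tasks have weight 2. The right nodes receiving a weight-1 task can be matched along
`E'`-edges to distinct left nodes, so there are at most `k` of them and every semi-matching costs at least
`2N - k`. Conversely, a maximum `E'`-matching extends to a perfect matching of the complete
bipartite graph, which uses exactly `k` edges of weight 1 by maximality and so costs `2N - k`.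
-/

/-- A matching in the complete bipartite graph on `Fin N × Fin N`. -/
def IsMatching {N : ℕ} (Mt : Finset (Fin N × Fin N)) : Prop :=
  ∀ e ∈ Mt, ∀ e' ∈ Mt, e ≠ e' → e.1 ≠ e'.1 ∧ e.2 ≠ e'.2

/-- The total makespan of scheduling tasks with the given list of weights in
the given order: the sum over `i` of the sum of the first `i` weights. -/
def listCost (l : List ℕ) : ℕ :=
  ∑ i ∈ Finset.range l.length, (l.take (i + 1)).sum

/-- The cost of a machine that got the multiset `ws` of task weights:
the minimum, over all orderings of the tasks, of the total makespan. -/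
noncomputable def nodeCost (ws : Multiset ℕ) : ℕ :=
  sInf {c | ∃ l : List ℕ, (l : Multiset ℕ) = ws ∧ c = listCost l}

/-- The cost of a semi-matching `f : L → R` (in a complete bipartite graph,
a semi-matching is just a function assigning to each left node a right node):
the sum over right nodes `r` of the cost of the multiset of weights of the
edges matched to `r`. -/
noncomputable def semiMatchingCost {N : ℕ} (w : Fin N → Fin N → ℕ) (f : Fin N → Fin N) : ℕ :=
  ∑ r : Fin N, nodeCost (((Finset.univ.filter fun l => f l = r)).val.map fun l => w l r)

open Finset

theorem exists_listCost_eq_nodeCost (ws : Multiset ℕ) :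
    ∃ l : List ℕ, (l : Multiset ℕ) = ws ∧ nodeCost ws = listCost l := by
  have hne : {c | ∃ l : List ℕ, (l : Multiset ℕ) = ws ∧ c = listCost l}.Nonempty :=
    ⟨listCost ws.toList, ws.toList, ws.coe_toList, rfl⟩
  exact Nat.sInf_mem hne

theorem nodeCost_singleton (a : ℕ) : nodeCost {a} = a := by
  obtain ⟨l, hl, hcost⟩ := exists_listCost_eq_nodeCost {a}
  obtain rfl : l = [a] := by simpa using hl
  simp [hcost, listCost]

theorem mul_sum_range_succ_le_listCost {c : ℕ} {l : List ℕ} (h : ∀ x ∈ l, c ≤ x) :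
    c * ∑ i ∈ range l.length, (i + 1) ≤ listCost l := by
  rw [mul_sum]
  refine sum_le_sum fun i hi => ?_
  have hlen : (l.take (i + 1)).length = i + 1 := by
    rw [List.length_take]
    exact min_eq_left (mem_range.1 hi)
  calc c * (i + 1) = (l.take (i + 1)).length • c := by rw [hlen, smul_eq_mul, mul_comm]
    _ ≤ (l.take (i + 1)).sum :=
      List.card_nsmul_le_sum _ _ fun x hx => h x (List.mem_of_mem_take hx)

theorem mul_sum_range_succ_le_nodeCost {c : ℕ} {ws : Multiset ℕ} (h : ∀ x ∈ ws, c ≤ x) :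
    c * ∑ i ∈ range (Multiset.card ws), (i + 1) ≤ nodeCost ws := by
  obtain ⟨l, rfl, hcost⟩ := exists_listCost_eq_nodeCost ws
  rw [hcost, Multiset.coe_card]
  exact mul_sum_range_succ_le_listCost fun x hx => h x (Multiset.mem_coe.mpr hx)

theorem two_mul_card_le_nodeCost_add_one {ws : Multiset ℕ} (h : ∀ x ∈ ws, 1 ≤ x) :
    2 * Multiset.card ws ≤ nodeCost ws + 1 := by
  have hcost := mul_sum_range_succ_le_nodeCost h
  set n := Multiset.card ws
  have hgauss := sum_range_id_mul_two n
  rw [sum_add_distrib, sum_const, card_range, smul_eq_mul, mul_one] at hcost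
  -- with Gauss' formula the claim reads `(n - 1) * (n - 2) ≥ 0`
  rcases Nat.lt_or_ge n 2 with hn | hn
  · interval_cases n <;> simp_all
  · nlinarith [Nat.sub_add_cancel (by omega : 1 ≤ n)]

theorem two_mul_card_le_nodeCost {ws : Multiset ℕ} (h : ∀ x ∈ ws, 2 ≤ x) :
    2 * Multiset.card ws ≤ nodeCost ws := by
  have hcost := mul_sum_range_succ_le_nodeCost h
  have hsum : Multiset.card ws ≤ ∑ i ∈ range (Multiset.card ws), (i + 1) := by
    simpa using card_nsmul_le_sum (range (Multiset.card ws)) (· + 1) 1 fun i _ => by omega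
  omega

theorem isMatching_iff_injOn {N : ℕ} {M : Finset (Fin N × Fin N)} :
    IsMatching M ↔ Set.InjOn Prod.fst (M : Set (Fin N × Fin N)) ∧
      Set.InjOn Prod.snd (M : Set (Fin N × Fin N)) := by
  refine ⟨fun h => ⟨?_, ?_⟩, fun ⟨h₁, h₂⟩ e he e' he' hne => ⟨?_, ?_⟩⟩
  · exact fun e he e' he' heq => by_contra fun hne => (h e he e' he' hne).1 heq
  · exact fun e he e' he' heq => by_contra fun hne => (h e he e' he' hne).2 heq
  · exact fun heq => hne (h₁ he he' heq)
  · exact fun heq => hne (h₂ he he' heq)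

theorem isMatching_image_graph {N : ℕ} {f : Fin N → Fin N} {t : Finset (Fin N)}
    (hf : Set.InjOn f t) : IsMatching (t.image fun l => (l, f l)) := by
  rw [isMatching_iff_injOn, coe_image]
  constructor
  · rintro _ ⟨a, -, rfl⟩ _ ⟨b, -, rfl⟩ hab
    rw [show a = b from hab]
  · rintro _ ⟨a, ha, rfl⟩ _ ⟨b, hb, rfl⟩ hab
    rw [hf ha hb hab]

theorem card_le_of_injOn_of_mem_upperBounds {N k : ℕ} {E' : Finset (Fin N × Fin N)}
    (hk : k ∈ upperBounds {c | ∃ M : Finset (Fin N × Fin N), IsMatching M ∧ M ⊆ E' ∧ c = M.card})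
    {f : Fin N → Fin N} {t : Finset (Fin N)} (hf : Set.InjOn f t)
    (ht : ∀ l ∈ t, (l, f l) ∈ E') : #t ≤ k := by
  refine hk ⟨_, isMatching_image_graph hf, ?_, ?_⟩
  · simpa [subset_iff] using ht
  · exact (card_image_of_injective _ fun a b hab => (Prod.ext_iff.1 hab).1).symm

theorem Equiv.Perm.exists_forall_mem_apply_fst_eq_snd {α : Type*} [Finite α] {M : Set (α × α)}
    (h₁ : Set.InjOn Prod.fst M) (h₂ : Set.InjOn Prod.snd M) :
    ∃ σ : Equiv.Perm α, ∀ e ∈ M, σ e.1 = e.2 := by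
  classical
  refine ⟨((Equiv.Set.imageOfInjOn _ _ h₁).symm.trans
    (Equiv.Set.imageOfInjOn _ _ h₂)).extendSubtype, fun e he => ?_⟩
  rw [Equiv.extendSubtype_apply_of_mem _ _ ⟨e, he, rfl⟩]
  have hsymm : (Equiv.Set.imageOfInjOn _ _ h₁).symm ⟨e.1, e, he, rfl⟩ = ⟨e, he⟩ :=
    (Equiv.symm_apply_eq _).2 rfl
  rw [Equiv.trans_apply, hsymm]
  rfl

theorem semiMatchingCost_perm {N : ℕ} (w : Fin N → Fin N → ℕ) (σ : Equiv.Perm (Fin N)) :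
    semiMatchingCost w σ = ∑ l, w l (σ l) := by
  rw [semiMatchingCost, ← Equiv.sum_comp σ]
  refine sum_congr rfl fun l _ => ?_
  have hfiber : univ.filter (fun l' => σ l' = σ l) = {l} := by
    ext; simp [σ.injective.eq_iff]
  rw [hfiber]
  simp [nodeCost_singleton]

theorem sum_ite_one_two_add_card_filter {α : Type*} (s : Finset α) (p : α → Prop)
    [DecidablePred p] : ∑ x ∈ s, (if p x then 1 else 2) + #(s.filter p) = 2 * #s := by
  rw [card_filter, ← sum_add_distrib, sum_congr rfl fun x _ => show
    (if p x then 1 else 2) + (if p x then 1 else 0) = 2 by split_ifs <;> rfl]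
  rw [sum_const, smul_eq_mul, mul_comm]

theorem two_mul_le_semiMatchingCost_add_card {N : ℕ} (E' : Finset (Fin N × Fin N))
    (f : Fin N → Fin N) :
    2 * N ≤ semiMatchingCost (fun l r => if (l, r) ∈ E' then 1 else 2) f
      + #((univ.filter fun l => (l, f l) ∈ E').image f) := by
  set T := (univ.filter fun l => (l, f l) ∈ E').image f
  have hN : 2 * N = ∑ r, 2 * #(univ.filter fun l => f l = r) := by
    rw [← mul_sum]
    simpa using card_eq_sum_card_fiberwise (f := f) (s := univ) (t := univ) (by simp)
  have hT : #T = ∑ r, if r ∈ T then 1 else 0 := by simp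
  rw [hN, semiMatchingCost, hT, ← sum_add_distrib]
  refine sum_le_sum fun r _ => ?_
  set ws := (univ.filter fun l => f l = r).val.map fun l => if (l, r) ∈ E' then 1 else 2
  have hcard : #(univ.filter fun l => f l = r) = Multiset.card ws :=
    (Multiset.card_map _ _).symm
  rw [hcard]
  by_cases hr : r ∈ T
  · rw [if_pos hr]
    refine two_mul_card_le_nodeCost_add_one fun x hx => ?_
    obtain ⟨l, -, rfl⟩ := Multiset.mem_map.1 hx
    split_ifs <;> omega
  · rw [if_neg hr, add_zero]
    refine two_mul_card_le_nodeCost fun x hx => ?_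
    obtain ⟨l, hl, rfl⟩ := Multiset.mem_map.1 hx
    have hfl : f l = r := by simpa using hl
    have hlr : (l, r) ∉ E' := fun hE => hr (mem_image.2 ⟨l, by simpa [hfl] using hE, hfl⟩)
    simp [hlr]

theorem exists_perm_card_filter_mem_eq {N k : ℕ} {E' : Finset (Fin N × Fin N)}
    (hk : IsGreatest {c | ∃ M : Finset (Fin N × Fin N), IsMatching M ∧ M ⊆ E' ∧ c = M.card} k) :
    ∃ σ : Equiv.Perm (Fin N), #(univ.filter fun l => (l, σ l) ∈ E') = k := by
  obtain ⟨M, hM, hME, rfl⟩ := hk.1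
  obtain ⟨σ, hσ⟩ := Equiv.Perm.exists_forall_mem_apply_fst_eq_snd
    (isMatching_iff_injOn.1 hM).1 (isMatching_iff_injOn.1 hM).2
  refine ⟨σ, le_antisymm ?_ ?_⟩
  · exact card_le_of_injOn_of_mem_upperBounds hk.2 σ.injective.injOn (by simp)
  · rw [← card_image_of_injOn (isMatching_iff_injOn.1 hM).1]
    refine card_le_card fun l hl => ?_
    obtain ⟨e, he, rfl⟩ := mem_image.1 hl
    simpa [hσ e he] using hME he

/-- Let `H` be a complete bipartite graph with parts of size `N`, where the
edges of `E'` have weight `1` and all other edges weight `2`.  If the maximum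
size of a matching using only `E'`-edges is `k`, then the minimum cost of a
semi-matching in `H` equals `2N − k`. -/
theorem stmt5 (N k : ℕ) (E' : Finset (Fin N × Fin N))
    (hk : IsGreatest {c | ∃ Mt : Finset (Fin N × Fin N),
      IsMatching Mt ∧ Mt ⊆ E' ∧ c = Mt.card} k) :
    IsLeast {c | ∃ f : Fin N → Fin N,
      c = semiMatchingCost (fun l r => if (l, r) ∈ E' then 1 else 2) f}
      (2 * N - k) := by
  constructor
  · obtain ⟨σ, hσ⟩ := exists_perm_card_filter_mem_eq hk
    have hsum := sum_ite_one_two_add_card_filter univ fun l => (l, σ l) ∈ E'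
    rw [card_univ, Fintype.card_fin, hσ] at hsum
    refine ⟨σ, ?_⟩
    rw [semiMatchingCost_perm]
    omega
  · rintro c ⟨f, rfl⟩
    set t := univ.filter fun l => (l, f l) ∈ E'
    have hsurj : Set.SurjOn f t (t.image f : Finset (Fin N)) := by
      rw [coe_image]
      exact Set.surjOn_image _ _
    obtain ⟨u, hut, hinj, himage⟩ := exists_subset_injOn_image_eq_of_surjOn _ _ hsurj
    have hu : #u ≤ k :=
      card_le_of_injOn_of_mem_upperBounds hk.2 hinj fun l hl => by simpa [t] using hut hl
    have hcost := two_mul_le_semiMatchingCost_add_card E' f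
    rw [← himage, card_image_of_injOn hinj] at hcost
    omega
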